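/- Let G be a finite group and K ⊴ H ≤ G with H/K cyclic, let A ⊴ H and D = K ∩ A. Then ε(A,D) = ε(H,K) + e for some central idempotent e of ℚH orthogonal to ε(H,K); in particular ε(H,K)·ε(A,D) = ε(H,K) in ℚH. -/

import Mathlib

/-! The heart of the matter is `ε(H,K) ε(A,D) = ε(H,K)`. Since `D ≤ K`, `ε(H,K)` absorbs `D̂`.
If `M` is a minimal normal subgroup of `A` above `D`, then `KM` is normal in `H` because `H/K` is
abelian, and it properly contains `K` because `M ∩ K = D < M`; so `KM` contains some minimal
normal `L` of `H` above `K`, and `ε(H,K) M̂ = ε(H,K) L̂ K̂ M̂ = 0`. Hence `ε(H,K)` absorbs every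
factor `D̂ - M̂` of `ε(A,D)`.

Both `ε`'s are supported in `H`, and conjugation by `h ∈ H` fixes each of them, since it permutes
the minimal normal subgroups in its defining product. So both are central in `ℚH`, and
`e = ε(A,D) - ε(H,K)` is the required idempotent. -/
open scoped BigOperators
noncomputable section
open scoped Classical
set_option linter.unusedSectionVars false
namespace SP
variable {G : Type} [Group G] [Fintype G]

def hsum (k : Type) [Field k] (H : Subgroup G) : MonoidAlgebra k G :=
  ∑ h ∈ (Set.toFinite (H : Set G)).toFinset, MonoidAlgebra.single h 1

/-- `Ĥ = (1/|H|) ∑_{h∈H} h` in the group algebra. -/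
def hat (k : Type) [Field k] (H : Subgroup G) : MonoidAlgebra k G :=
  (Nat.card H : k)⁻¹ • hsum k H

lemma commute_single_hsum (k : Type) [Field k] {L : Subgroup G} {h : G}
    (hh : ∀ l ∈ L, h * l * h⁻¹ ∈ L) (hh' : ∀ l ∈ L, h⁻¹ * l * h ∈ L) :
    Commute (MonoidAlgebra.single h (1 : k)) (hsum k L) := by
  unfold hsum
  rw [Commute, SemiconjBy, Finset.mul_sum, Finset.sum_mul]
  refine Finset.sum_nbij' (fun x => h * x * h⁻¹) (fun y => h⁻¹ * y * h) ?_ ?_ ?_ ?_ ?_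
  · intro x hx
    simp only [Set.Finite.mem_toFinset, SetLike.mem_coe] at hx ⊢
    exact hh x hx
  · intro y hy
    simp only [Set.Finite.mem_toFinset, SetLike.mem_coe] at hy ⊢
    exact hh' y hy
  · intro x _; group
  · intro y _; group
  · intro x _
    rw [MonoidAlgebra.single_mul_single, MonoidAlgebra.single_mul_single]
    congr 1
    group

lemma normal_conj {H L : Subgroup G} (hLH : L ≤ H) (hn : (L.subgroupOf H).Normal) :
    ∀ x ∈ H, ∀ l ∈ L, x * l * x⁻¹ ∈ L := by
  intro x hx l hl
  have hl' : (⟨l, hLH hl⟩ : H) ∈ L.subgroupOf H := Subgroup.mem_subgroupOf.2 hl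
  have := hn.conj_mem _ hl' ⟨x, hx⟩
  rw [Subgroup.mem_subgroupOf] at this
  simpa using this

lemma commute_hat_hat (k : Type) [Field k] {H L M : Subgroup G}
    (hM : M ≤ H) (hL : ∀ x ∈ H, ∀ l ∈ L, x * l * x⁻¹ ∈ L) :
    Commute (hat k L) (hat k M) := by
  unfold hat
  rw [Commute, SemiconjBy, smul_mul_smul_comm, smul_mul_smul_comm, mul_comm]
  congr 1
  refine (Commute.sum_right _ _ _ ?_)
  intro m hm
  simp only [Set.Finite.mem_toFinset, SetLike.mem_coe] at hm
  exact (commute_single_hsum k (fun l hl => hL m (hM hm) l hl)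
    (fun l hl => by simpa using hL m⁻¹ (hM (inv_mem hm)) l hl)).symm

/-- minimal normal subgroups of `H` containing `K` properly -/
def minNormalAbove (H K : Subgroup G) : Set (Subgroup G) :=
  {L | K < L ∧ L ≤ H ∧ (L.subgroupOf H).Normal ∧
    ∀ M : Subgroup G, M ≤ H → (M.subgroupOf H).Normal → K < M → M ≤ L → M = L}

/-- `ε(H,K)` -/
def eps (k : Type) [Field k] (H K : Subgroup G) : MonoidAlgebra k G :=
  if H = K then hat k K
  else Finset.noncommProd (Set.toFinite (minNormalAbove H K)).toFinset
    (fun L => hat k K - hat k L) (by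
      intro L hL M hM _
      simp only [Finset.mem_coe, Set.Finite.mem_toFinset] at hL hM
      obtain ⟨hKL, hLH, hLn, -⟩ := hL
      obtain ⟨hKM, hMH, hMn, -⟩ := hM
      have hKH : K ≤ H := hKL.le.trans hLH
      have cLM : Commute (hat k L) (hat k M) := commute_hat_hat k hMH (normal_conj hLH hLn)
      have cKM : Commute (hat k K) (hat k M) :=
        ((commute_hat_hat k hKH (normal_conj hMH hMn))).symm
      have cLK : Commute (hat k L) (hat k K) := commute_hat_hat k hKH (normal_conj hLH hLn)
      have cKK : Commute (hat k K) (hat k K) := Commute.refl _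
      exact (cKK.sub_left cLK).sub_right (cKM.sub_left cLM))

end SP

open MonoidAlgebra
open scoped commutatorElement

lemma Finset.noncommProd_map {α γ β : Type*} [Monoid β] (s : Finset α) (f : α ↪ γ)
    (g : γ → β) (comm) :
    (s.map f).noncommProd g comm = s.noncommProd (g ∘ f) fun _ ha _ hb hab =>
      comm (Finset.mem_map_of_mem f ha) (Finset.mem_map_of_mem f hb) (f.injective.ne hab) := by
  simp only [Finset.noncommProd, Finset.map_val, Multiset.map_map]

namespace Subgroup

variable {G : Type*} [Group G]

lemma normal_subgroupOf_map_iff {G' : Type*} [Group G'] (e : G ≃* G') {L H : Subgroup G}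
    (hLH : L ≤ H) :
    ((L.map e.toMonoidHom).subgroupOf (H.map e.toMonoidHom)).Normal ↔
      (L.subgroupOf H).Normal := by
  rw [normal_subgroupOf_iff_le_normalizer hLH, normal_subgroupOf_iff_le_normalizer (map_mono hLH),
    ← map_equiv_normalizer_eq, map_le_map_iff_of_injective e.injective]

lemma sup_subgroupOf_normal_of_commutator_le {H K M : Subgroup G} (hKH : K ≤ H)
    (hK : H ≤ normalizer K) (hMH : M ≤ H) (hHM : ⁅H, M⁆ ≤ K) :
    ((K ⊔ M).subgroupOf H).Normal := by
  rw [normal_subgroupOf_iff (sup_le hKH hMH)]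
  intro n x hn hx
  suffices K ⊔ M ≤ (K ⊔ M).comap (MulAut.conj x).toMonoidHom from this hn
  refine sup_le (fun y hy => mem_sup_left ((mem_normalizer_iff.mp (hK hx) y).mp hy))
    (fun m hm => ?_)
  have hconj : x * m * x⁻¹ = ⁅x, m⁆ * m := by rw [commutatorElement_def]; group
  show x * m * x⁻¹ ∈ K ⊔ M
  rw [hconj]
  exact mul_mem (mem_sup_left (hHM (commutator_mem_commutator hx hm))) (mem_sup_right hm)

lemma commutator_le_of_isCyclic {H K : Subgroup G} [(K.subgroupOf H).Normal]
    (hcyc : IsCyclic (H ⧸ K.subgroupOf H)) : ⁅H, H⁆ ≤ K := by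
  let := hcyc.commGroup
  rw [commutator_le]
  intro a ha b hb
  have h : QuotientGroup.mk' (K.subgroupOf H) ⁅(⟨a, ha⟩ : H), ⟨b, hb⟩⁆ = 1 := by
    rw [map_commutatorElement, commutatorElement_eq_one_iff_mul_comm]
    exact mul_comm _ _
  exact mem_subgroupOf.mp ((QuotientGroup.eq_one_iff _).mp h)

end Subgroup

namespace MonoidAlgebra

variable {R G : Type*} [CommSemiring R] [Group G]

lemma single_mul_mul_single_inv (g : G) (x : MonoidAlgebra R G) :
    single g 1 * x * single g⁻¹ 1 = domCongr R R (MulAut.conj g) x := by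
  ext y
  simp [coeff_mul_single_apply, coeff_single_mul_apply, mul_assoc]

lemma commute_single_of_domCongr_conj {g : G} {x : MonoidAlgebra R G}
    (h : domCongr R R (MulAut.conj g) x = x) : Commute (single g 1) x := by
  rw [← single_mul_mul_single_inv] at h
  calc single g 1 * x = single g 1 * x * single g⁻¹ 1 * single g 1 := by
        rw [mul_assoc _ (single g⁻¹ 1), single_mul_single, inv_mul_cancel, one_mul, ← one_def,
          mul_one]
    _ = x * single g 1 := by rw [h]

variable (R) in
def leftStabilizer (y : MonoidAlgebra R G) : Subgroup G where
  carrier := {x | single x 1 * y = y}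
  one_mem' := by simp [← one_def]
  mul_mem' {a b} ha hb := by
    simp only [Set.mem_ofPred_eq] at *
    rw [← one_mul (1 : R), ← single_mul_single, mul_assoc, hb, ha]
  inv_mem' {a} ha := by
    simp only [Set.mem_ofPred_eq] at *
    conv_lhs => rw [← ha, ← mul_assoc, single_mul_single, inv_mul_cancel, one_mul, ← one_def,
      one_mul]

variable (R) in
def supportedIn (H : Subgroup G) : Subalgebra R (MonoidAlgebra R G) :=
  (supported R R (H : Set G)).toSubalgebra
    (by rw [one_def, supported_eq_span_single]; exact Submodule.subset_span ⟨1, H.one_mem, rfl⟩)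
    (fun x y hx hy => by
      rw [mem_supported] at *
      exact (Finset.coe_subset.mpr (support_coeff_mul_subset x y)).trans
        ((Finset.coe_mul _ _).trans_subset (Set.mul_subset_mul hx hy) |>.trans
          (by rintro _ ⟨a, ha, b, hb, rfl⟩; exact H.mul_mem ha hb)))

lemma single_mem_supportedIn {H : Subgroup G} {g : G} (hg : g ∈ H) :
    single g 1 ∈ supportedIn R H := by
  rw [supportedIn, Submodule.mem_toSubalgebra, supported_eq_span_single]
  exact Submodule.subset_span ⟨g, hg, rfl⟩

lemma supportedIn_mono {H₁ H₂ : Subgroup G} (h : H₁ ≤ H₂) : supportedIn R H₁ ≤ supportedIn R H₂ :=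
  supported_mono h

lemma commute_of_mem_supportedIn {H : Subgroup G} {x y : MonoidAlgebra R G}
    (hx : x ∈ supportedIn R H) (hy : ∀ g ∈ H, Commute (single g 1) y) : Commute x y := by
  rw [supportedIn, Submodule.mem_toSubalgebra, supported_eq_span_single] at hx
  induction hx using Submodule.span_induction with
  | mem _ h => obtain ⟨g, hg, rfl⟩ := h; exact hy g hg
  | zero => exact Commute.zero_left y
  | add _ _ _ _ h₁ h₂ => exact h₁.add_left h₂
  | smul c _ _ h => exact h.smul_left c

end MonoidAlgebra

namespace SP

lemma map_mem_minNormalAbove_iff {G G' : Type} [Group G] [Group G'] (e : G ≃* G')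
    {H K L : Subgroup G} :
    L.map e.toMonoidHom ∈ minNormalAbove (H.map e.toMonoidHom) (K.map e.toMonoidHom) ↔
      L ∈ minNormalAbove H K := by
  let φ := e.mapSubgroup
  change φ L ∈ minNormalAbove (φ H) (φ K) ↔ _
  simp only [minNormalAbove, Set.mem_ofPred_eq]
  rw [φ.surjective.forall]
  simp only [φ.le_iff_le, φ.lt_iff_lt, φ.injective.eq_iff]
  constructor <;> rintro ⟨hKL, hLH, hL, hmin⟩
  · exact ⟨hKL, hLH, (Subgroup.normal_subgroupOf_map_iff e hLH).mp hL,
      fun M hMH hM => hmin M hMH ((Subgroup.normal_subgroupOf_map_iff e hMH).mpr hM)⟩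
  · exact ⟨hKL, hLH, (Subgroup.normal_subgroupOf_map_iff e hLH).mpr hL,
      fun M hMH hM => hmin M hMH ((Subgroup.normal_subgroupOf_map_iff e hMH).mp hM)⟩

variable {G G' : Type} [Group G] [Fintype G] [Group G'] [Fintype G'] {k : Type} [Field k]

lemma hsum_eq_sum (P : Subgroup G) : hsum k P = ∑ p : P, single (p : G) (1 : k) := by
  rw [hsum, ← Finset.sum_coe_sort]
  exact Fintype.sum_equiv (Equiv.subtypeEquivRight (by simp)) _ _ (fun _ => rfl)

lemma single_mul_hat {P : Subgroup G} {x : G} (hx : x ∈ P) :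
    single x (1 : k) * hat k P = hat k P := by
  simp only [hat, mul_smul_comm, hsum_eq_sum, Finset.mul_sum, single_mul_single, one_mul]
  congr 1
  exact Fintype.sum_equiv (Equiv.mulLeft ⟨x, hx⟩) _ _ (fun _ => rfl)

lemma hat_mul_single {P : Subgroup G} {x : G} (hx : x ∈ P) :
    hat k P * single x (1 : k) = hat k P := by
  simp only [hat, smul_mul_assoc, hsum_eq_sum, Finset.sum_mul, single_mul_single, one_mul]
  congr 1
  exact Fintype.sum_equiv (Equiv.mulRight ⟨x, hx⟩) _ _ (fun _ => rfl)

lemma domCongr_hsum (e : G ≃* G') (P : Subgroup G) :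
    domCongr k k e (hsum k P) = hsum k (P.map e.toMonoidHom) := by
  simp only [hsum_eq_sum, map_sum, domCongr_single]
  exact Fintype.sum_equiv (P.equivMapOfInjective e.toMonoidHom e.injective).toEquiv _ _
    (fun _ => rfl)

lemma domCongr_hat (e : G ≃* G') (P : Subgroup G) :
    domCongr k k e (hat k P) = hat k (P.map e.toMonoidHom) := by
  rw [hat, hat, map_smul, domCongr_hsum,
    Nat.card_congr (P.equivMapOfInjective e.toMonoidHom e.injective).toEquiv]

lemma commute_single_hat {g : G} {P : Subgroup G} (hg : g ∈ Subgroup.normalizer P) :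
    Commute (single g 1) (hat k P) :=
  commute_single_of_domCongr_conj <| by
    rw [domCongr_hat]; exact congrArg _ (Subgroup.mem_normalizer_iff_map_conj_eq.mp hg)

lemma hat_mem_supportedIn {H P : Subgroup G} (h : P ≤ H) : hat k P ∈ supportedIn k H := by
  refine Subalgebra.smul_mem _ (Subalgebra.sum_mem _ fun p hp => single_mem_supportedIn (h ?_)) _
  simpa using hp

lemma pairwise_commute_minNormalAbove (H K : Subgroup G) :
    ((Set.toFinite (minNormalAbove H K)).toFinset : Set (Subgroup G)).Pairwise
      fun L M => Commute (hat k K - hat k L) (hat k K - hat k M) := by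
  intro L hL M hM _
  simp only [Finset.mem_coe, Set.Finite.mem_toFinset] at hL hM
  obtain ⟨hKL, hLH, hLn, -⟩ := hL
  obtain ⟨hKM, hMH, hMn, -⟩ := hM
  have hKH : K ≤ H := hKL.le.trans hLH
  exact ((Commute.refl _).sub_left (commute_hat_hat k hKH (normal_conj hLH hLn))).sub_right
    ((commute_hat_hat k hKH (normal_conj hMH hMn)).symm.sub_left
      (commute_hat_hat k hMH (normal_conj hLH hLn)))

lemma eps_of_eq {H K : Subgroup G} (h : H = K) : eps k H K = hat k K := if_pos h

lemma eps_of_ne {H K : Subgroup G} (h : H ≠ K) :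
    eps k H K = (Set.toFinite (minNormalAbove H K)).toFinset.noncommProd
      (fun L => hat k K - hat k L) (pairwise_commute_minNormalAbove H K) := if_neg h

lemma exists_mem_minNormalAbove_le {H K N : Subgroup G} (hNH : N ≤ H)
    (hN : (N.subgroupOf H).Normal) (hKN : K < N) : ∃ L ∈ minNormalAbove H K, L ≤ N := by
  obtain ⟨L, hLN, ⟨hKL, hLH, hL⟩, hmin⟩ := exists_minimal_le_of_wellFoundedLT
    (fun M : Subgroup G => K < M ∧ M ≤ H ∧ (M.subgroupOf H).Normal) N ⟨hKN, hNH, hN⟩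
  exact ⟨L, ⟨hKL, hLH, hL, fun M hMH hM hKM hML => le_antisymm hML (hmin ⟨hKM, hMH, hM⟩ hML)⟩,
    hLN⟩

lemma eps_mem_supportedIn {H K : Subgroup G} (hKH : K ≤ H) : eps k H K ∈ supportedIn k H := by
  by_cases hHK : H = K
  · exact eps_of_eq (k := k) hHK ▸ hat_mem_supportedIn hKH
  rw [eps_of_ne hHK]
  refine Submonoid.noncommProd_mem (supportedIn k H).toSubmonoid _ _ _ fun L hL => ?_
  simp only [Set.Finite.mem_toFinset] at hL
  exact (supportedIn k H).sub_mem (hat_mem_supportedIn hKH) (hat_mem_supportedIn hL.2.1)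

lemma domCongr_eps (e : G ≃* G') (H K : Subgroup G) :
    domCongr k k e (eps k H K) = eps k (H.map e.toMonoidHom) (K.map e.toMonoidHom) := by
  by_cases hHK : H = K
  · rw [eps_of_eq hHK, eps_of_eq (congrArg _ hHK), domCongr_hat]
  have hne : H.map e.toMonoidHom ≠ K.map e.toMonoidHom :=
    (Subgroup.map_injective e.injective).ne hHK
  have hS : (Set.toFinite (minNormalAbove (H.map e.toMonoidHom) (K.map e.toMonoidHom))).toFinset
      = (Set.toFinite (minNormalAbove H K)).toFinset.map e.mapSubgroup.toEquiv.toEmbedding := by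
    ext M'
    obtain ⟨M, rfl⟩ := e.mapSubgroup.surjective M'
    rw [Set.Finite.mem_toFinset]
    exact ((map_mem_minNormalAbove_iff e).trans (Set.Finite.mem_toFinset _).symm).trans
      (Finset.mem_map' _).symm
  rw [eps_of_ne hHK, eps_of_ne hne, Finset.map_noncommProd]
  refine Eq.symm <| (Finset.noncommProd_congr hS (fun _ _ => rfl) _).trans <|
    (Finset.noncommProd_map _ _ _ _).trans <| Finset.noncommProd_congr rfl (fun L _ => ?_) _
  rw [map_sub, domCongr_hat, domCongr_hat]
  rfl

lemma commute_single_eps {g : G} {H K : Subgroup G} (hH : g ∈ Subgroup.normalizer H)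
    (hK : g ∈ Subgroup.normalizer K) : Commute (single g 1) (eps k H K) :=
  commute_single_of_domCongr_conj <| by
    rw [domCongr_eps]
    exact congrArg₂ (eps k) (Subgroup.mem_normalizer_iff_map_conj_eq.mp hH)
      (Subgroup.mem_normalizer_iff_map_conj_eq.mp hK)

variable [CharZero k]

lemma hat_mul_eq_self {P : Subgroup G} {y : MonoidAlgebra k G}
    (hy : ∀ x ∈ P, single x 1 * y = y) : hat k P * y = y := by
  have hcard : (Nat.card P : k) ≠ 0 := Nat.cast_ne_zero.mpr Nat.card_pos.ne'
  rw [hat, smul_mul_assoc, hsum_eq_sum, Finset.sum_mul,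
    Finset.sum_congr rfl fun (p : P) _ => hy p p.2, Finset.sum_const, Finset.card_univ,
    ← Nat.card_eq_fintype_card, ← Nat.cast_smul_eq_nsmul k, smul_smul, inv_mul_cancel₀ hcard,
    one_smul]

lemma mul_hat_eq_self {P : Subgroup G} {y : MonoidAlgebra k G}
    (hy : ∀ x ∈ P, y * single x 1 = y) : y * hat k P = y := by
  have hcard : (Nat.card P : k) ≠ 0 := Nat.cast_ne_zero.mpr Nat.card_pos.ne'
  rw [hat, mul_smul_comm, hsum_eq_sum, Finset.mul_sum,
    Finset.sum_congr rfl fun (p : P) _ => hy p p.2, Finset.sum_const, Finset.card_univ,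
    ← Nat.card_eq_fintype_card, ← Nat.cast_smul_eq_nsmul k, smul_smul, inv_mul_cancel₀ hcard,
    one_smul]

lemma hat_mul_hat_of_le {P Q : Subgroup G} (h : P ≤ Q) : hat k P * hat k Q = hat k Q :=
  hat_mul_eq_self fun _ hx => single_mul_hat (h hx)

lemma hat_mul_hat_of_ge {P Q : Subgroup G} (h : P ≤ Q) : hat k Q * hat k P = hat k Q :=
  mul_hat_eq_self fun _ hx => hat_mul_single (h hx)

lemma hat_mul_hat_self (P : Subgroup G) : hat k P * hat k P = hat k P :=
  hat_mul_hat_of_le le_rfl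

lemma eps_mul_hat_eq_zero_of_mem_minNormalAbove {H K L : Subgroup G}
    (hL : L ∈ minNormalAbove H K) : eps k H K * hat k L = 0 := by
  have hne : H ≠ K := by rintro rfl; exact (hL.1.trans_le hL.2.1).false
  have hmem : L ∈ (Set.toFinite (minNormalAbove H K)).toFinset := by simpa using hL
  rw [eps_of_ne hne, ← Finset.noncommProd_erase_mul _ hmem, mul_assoc, sub_mul,
    hat_mul_hat_of_le hL.1.le, hat_mul_hat_self, sub_self, mul_zero]

lemma eps_mul_hat_self {H K : Subgroup G} (hKH : K ≤ H) : eps k H K * hat k K = eps k H K := by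
  by_cases hHK : H = K
  · rw [eps_of_eq hHK, hat_mul_hat_self]
  have hH : (H.subgroupOf H).Normal := by rw [Subgroup.subgroupOf_self]; infer_instance
  obtain ⟨L, hL, -⟩ := exists_mem_minNormalAbove_le le_rfl hH (lt_of_le_of_ne hKH (Ne.symm hHK))
  have hmem : L ∈ (Set.toFinite (minNormalAbove H K)).toFinset := by simpa using hL
  rw [eps_of_ne hHK, ← Finset.noncommProd_erase_mul _ hmem, mul_assoc, sub_mul,
    hat_mul_hat_self, hat_mul_hat_of_ge hL.1.le]

lemma isIdempotentElem_eps (H K : Subgroup G) : IsIdempotentElem (eps k H K) := by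
  by_cases hHK : H = K
  · rw [eps_of_eq hHK]; exact hat_mul_hat_self K
  rw [IsIdempotentElem, eps_of_ne hHK, ← Finset.noncommProd_mul_distrib _ _
    (pairwise_commute_minNormalAbove H K) (pairwise_commute_minNormalAbove H K)
    (pairwise_commute_minNormalAbove H K)]
  refine Finset.noncommProd_congr rfl (fun L hL => ?_) _
  simp only [Set.Finite.mem_toFinset] at hL
  rw [Pi.mul_apply, sub_mul, mul_sub, mul_sub, hat_mul_hat_self, hat_mul_hat_self,
    hat_mul_hat_of_le hL.1.le, hat_mul_hat_of_ge hL.1.le, sub_self, sub_zero]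

lemma eps_mul_hat_eq_zero_of_mem_minNormalAbove_inf {H K A M : Subgroup G} (hKH : K ≤ H)
    (hK : H ≤ Subgroup.normalizer K) (hAH : A ≤ H) (hHA : ⁅H, A⁆ ≤ K)
    (hM : M ∈ minNormalAbove A (K ⊓ A)) : eps k H K * hat k M = 0 := by
  obtain ⟨hDM, hMA, -, -⟩ := hM
  have hMH := hMA.trans hAH
  obtain ⟨m, hm, hmD⟩ := SetLike.exists_of_lt hDM
  have hKKM : K < K ⊔ M :=
    lt_of_le_of_ne le_sup_left fun h => hmD ⟨h ▸ Subgroup.mem_sup_right hm, hMA hm⟩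
  obtain ⟨L, hL, hLKM⟩ := exists_mem_minNormalAbove_le (sup_le hKH hMH)
    (Subgroup.sup_subgroupOf_normal_of_commutator_le hKH hK hMH
      ((Subgroup.commutator_mono le_rfl hMA).trans hHA)) hKKM
  have hstab : K ⊔ M ≤ leftStabilizer k (hat k K * hat k M) := by
    refine sup_le (fun x hx => ?_) (fun x hx => ?_)
    · show single x 1 * (hat k K * hat k M) = _
      rw [← mul_assoc, single_mul_hat hx]
    · show single x 1 * (hat k K * hat k M) = _
      rw [← mul_assoc, (commute_single_hat (hK (hMH hx))).eq, mul_assoc, single_mul_hat hx]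
  calc eps k H K * hat k M = eps k H K * hat k L * (hat k K * hat k M) := by
        rw [mul_assoc, hat_mul_eq_self fun x hx => (hLKM.trans hstab) hx, ← mul_assoc,
          eps_mul_hat_self hKH]
    _ = 0 := by rw [eps_mul_hat_eq_zero_of_mem_minNormalAbove hL, zero_mul]

lemma eps_mul_eps_inf {H K A : Subgroup G} (hKH : K ≤ H) (hK : H ≤ Subgroup.normalizer K)
    (hAH : A ≤ H) (hHA : ⁅H, A⁆ ≤ K) : eps k H K * eps k A (K ⊓ A) = eps k H K := by
  have hD : eps k H K * hat k (K ⊓ A) = eps k H K := by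
    conv_lhs => rw [← eps_mul_hat_self hKH, mul_assoc, hat_mul_hat_of_ge inf_le_left]
    exact eps_mul_hat_self hKH
  by_cases hAD : A = K ⊓ A
  · rw [eps_of_eq hAD, hD]
  rw [eps_of_ne hAD]
  refine Finset.noncommProd_induction _ _ _ (fun y => eps k H K * y = eps k H K)
    (fun a b ha hb => by rw [← mul_assoc, ha, hb]) (mul_one _) fun M hM => ?_
  rw [Set.Finite.mem_toFinset] at hM
  rw [mul_sub, hD, eps_mul_hat_eq_zero_of_mem_minNormalAbove_inf hKH hK hAH hHA hM, sub_zero]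

/-- Let `K ⊴ H ≤ G` with `H/K` cyclic, `A ⊴ H` and `D = K ∩ A`.  Then
`ε(A,D) = ε(H,K) + e` for some central idempotent `e` of `ℚH` orthogonal to `ε(H,K)`;
in particular `ε(H,K)·ε(A,D) = ε(H,K)`. -/
theorem eps_decomposition (G : Type) [Group G] [Fintype G]
    (H K A : Subgroup G) (hKH : K ≤ H) (hKn : (K.subgroupOf H).Normal)
    (hcyc : IsCyclic (H ⧸ K.subgroupOf H))
    (hAH : A ≤ H) (hAn : (A.subgroupOf H).Normal) :
    ∃ e : MonoidAlgebra ℚ G,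
      eps ℚ A (K ⊓ A) = eps ℚ H K + e ∧
      e * e = e ∧
      (∀ g : G, g ∉ H → e.coeff g = 0) ∧
      (∀ g ∈ H, MonoidAlgebra.single g (1 : ℚ) * e = e * MonoidAlgebra.single g 1) ∧
      e * eps ℚ H K = 0 ∧ eps ℚ H K * e = 0 ∧
      eps ℚ H K * eps ℚ A (K ⊓ A) = eps ℚ H K := by
  have hK := (Subgroup.normal_subgroupOf_iff_le_normalizer hKH).mp hKn
  have hA := (Subgroup.normal_subgroupOf_iff_le_normalizer hAH).mp hAn
  have hxy : eps ℚ H K * eps ℚ A (K ⊓ A) = eps ℚ H K := eps_mul_eps_inf hKH hK hAH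
    ((Subgroup.commutator_mono le_rfl hAH).trans (Subgroup.commutator_le_of_isCyclic hcyc))
  have hx_mem : eps ℚ H K ∈ supportedIn ℚ H := eps_mem_supportedIn hKH
  have hy_mem : eps ℚ A (K ⊓ A) ∈ supportedIn ℚ H :=
    supportedIn_mono hAH (eps_mem_supportedIn inf_le_right)
  have hx_central (g : G) (hg : g ∈ H) : Commute (single g 1) (eps ℚ H K) :=
    commute_single_eps (Subgroup.le_normalizer hg) (hK hg)
  have hy_central (g : G) (hg : g ∈ H) : Commute (single g 1) (eps ℚ A (K ⊓ A)) :=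
    commute_single_eps (hA hg) (Subgroup.inf_normalizer_le_normalizer_inf ⟨hK hg, hA hg⟩)
  have hyx : eps ℚ A (K ⊓ A) * eps ℚ H K = eps ℚ H K :=
    (commute_of_mem_supportedIn hx_mem hy_central).eq.symm.trans hxy
  refine ⟨eps ℚ A (K ⊓ A) - eps ℚ H K, by abel,
    ((isIdempotentElem_eps H K).sub (isIdempotentElem_eps A (K ⊓ A)) hxy hyx).eq,
    fun g hg => mem_supported'.mp (sub_mem hy_mem hx_mem) g hg,
    fun g hg => ((hy_central g hg).sub_right (hx_central g hg)).eq, ?_, ?_, hxy⟩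
  · rw [sub_mul, hyx, (isIdempotentElem_eps H K).eq, sub_self]
  · rw [mul_sub, hxy, (isIdempotentElem_eps H K).eq, sub_self]

end SP
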